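/- Let ψ : [a,b] → ℝ be smooth, α : [a,b] → (0,1) continuous with max α = ᾱ < 1, and let δ > 0 be such that inf_I √(1+ψ_x²) − ᾱ sup_I √(1+ψ_x²) ≥ (1−ᾱ)/2 for every interval I of width ≤ δ. Let u ∈ W^{1,1}(a,b) with u ≥ ψ, let I = [y₀,y₁] ⊂ (a,b) have width δ, suppose u = ψ at y₀ and y₁ and u > ψ everywhere in the interior of I. Define v := ψ on I and v := u outside I. Then v ∈ W^{1,1}(a,b), v ≥ ψ, and E₀[u] − E₀[v] ≥ δ(1−ᾱ)/2 > 0, where E₀[w] := ∫_a^b α̃[w]√(1+w_x²) dx with α̃[w](x) = 1 if w(x) > ψ(x) and α̃[w](x) = α(x) if w(x) ≤ ψ(x). -/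

import Mathlib

open Real Set MeasureTheory intervalIntegral

private lemma aemeasurable_ite' {p : ℝ → Prop} [DecidablePred p]
    (hp : MeasurableSet {x | p x}) {f g : ℝ → ℝ} {μ : Measure ℝ}
    (hf : AEMeasurable f μ) (hg : AEMeasurable g μ) :
    AEMeasurable (fun x => if p x then f x else g x) μ := by
  have h : (fun x => if p x then f x else g x)
      = {x | p x}.indicator f + {x | p x}ᶜ.indicator g := by
    funext x; by_cases hx : p x <;> simp [Set.indicator, hx]
  rw [h]; exact (hf.indicator hp).add (hg.indicator hp.compl)

private lemma sqrt_linear_bound (m t : ℝ) :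
    (1 + m * t) / Real.sqrt (1 + m ^ 2) ≤ Real.sqrt (1 + t ^ 2) := by
  have hm : (0:ℝ) < 1 + m ^ 2 := by positivity
  have hA : 0 < Real.sqrt (1 + m ^ 2) := Real.sqrt_pos.mpr hm
  rw [div_le_iff₀ hA]
  rcases le_or_gt (1 + m * t) 0 with h | h
  · exact h.trans (by positivity)
  · calc 1 + m * t = Real.sqrt ((1 + m * t) ^ 2) := (Real.sqrt_sq h.le).symm
      _ ≤ Real.sqrt ((1 + t ^ 2) * (1 + m ^ 2)) :=
          Real.sqrt_le_sqrt (by nlinarith [sq_nonneg (m - t)])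
      _ = Real.sqrt (1 + t ^ 2) * Real.sqrt (1 + m ^ 2) := Real.sqrt_mul (by positivity) _

set_option maxHeartbeats 1000000 in
/-- replacing `u` by the obstacle `ψ` on a short interval `I = [y₀,y₁]` of width
`δ` where `u` touches `ψ` at the endpoints and lies strictly above it inside strictly decreases
the energy `E₀` by at least `δ(1-ᾱ)/2 > 0`.  Here `W^{1,1}` functions are modelled as
everywhere differentiable functions with interval-integrable energy density. -/
theorem glue_decreases_energy
    (a b : ℝ) (hab : a < b)
    (ψ : ℝ → ℝ) (hψ : ContDiff ℝ (⊤ : ℕ∞) ψ)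
    (α : ℝ → ℝ) (hα : ContinuousOn α (Icc a b))
    (hα01 : ∀ x ∈ Icc a b, α x ∈ Ioo (0:ℝ) 1)
    (ᾱ : ℝ) (hᾱmax : IsGreatest (α '' Icc a b) ᾱ) (hᾱlt : ᾱ < 1)
    (δ : ℝ) (hδpos : 0 < δ)
    (hδ : ∀ y₀ y₁ : ℝ, a < y₀ → y₁ < b → y₀ ≤ y₁ → y₁ - y₀ ≤ δ →
      sInf ((fun x => Real.sqrt (1 + (deriv ψ x) ^ 2)) '' Icc y₀ y₁) -
        ᾱ * sSup ((fun x => Real.sqrt (1 + (deriv ψ x) ^ 2)) '' Icc y₀ y₁) ≥ (1 - ᾱ) / 2)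
    -- the energy functional E₀
    (E₀ : (ℝ → ℝ) → ℝ)
    (hE₀ : ∀ w : ℝ → ℝ, E₀ w =
      ∫ x in a..b, (if ψ x < w x then 1 else α x) * Real.sqrt (1 + (deriv w x) ^ 2))
    -- u ∈ W^{1,1}(a,b), u ≥ ψ
    (u : ℝ → ℝ) (hu : ∀ x, DifferentiableAt ℝ u x)
    (huint : IntervalIntegrable (fun x => Real.sqrt (1 + (deriv u x) ^ 2)) volume a b)
    (huψ : ∀ x ∈ Icc a b, ψ x ≤ u x)
    -- the interval I = [y₀, y₁] of width δ
    (y₀ y₁ : ℝ) (hy₀ : a < y₀) (hy₁ : y₁ < b) (hwidth : y₁ - y₀ = δ)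
    (htouch₀ : u y₀ = ψ y₀) (htouch₁ : u y₁ = ψ y₁)
    (habove : ∀ x ∈ Ioo y₀ y₁, ψ x < u x)
    -- the glued function v
    (v : ℝ → ℝ) (hv : ∀ x, v x = if x ∈ Icc y₀ y₁ then ψ x else u x) :
    ContinuousOn v (Icc a b) ∧ (∀ x ∈ Icc a b, ψ x ≤ v x) ∧
      E₀ u - E₀ v ≥ δ * (1 - ᾱ) / 2 ∧ 0 < δ * (1 - ᾱ) / 2 := by
  have hy01 : y₀ < y₁ := by linarith
  have hIsub : Icc y₀ y₁ ⊆ Icc a b := Icc_subset_Icc hy₀.le hy₁.le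
  have hψc : Continuous ψ := hψ.continuous
  have hψ'c : Continuous (deriv ψ) := (contDiff_infty_iff_deriv.mp (hψ.of_le (by simp))).2.continuous
  have hucont : Continuous u := by
    rw [continuous_iff_continuousAt]; exact fun x => (hu x).continuousAt
  -- continuity of v
  have hveq : v = fun x => if y₀ ≤ x then (if x ≤ y₁ then ψ x else u x) else u x := by
    funext x; rw [hv]
    by_cases h1 : y₀ ≤ x <;> by_cases h2 : x ≤ y₁ <;> simp [Set.mem_Icc, h1, h2]
  have hvcont : Continuous v := by
    rw [hveq]
    refine Continuous.if_le ?_ hucont continuous_const continuous_id ?_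
    · exact Continuous.if_le hψc hucont continuous_id continuous_const
        (fun x hx => by rw [hx]; exact htouch₁.symm)
    · intro x hx
      rw [← hx, if_pos hy01.le]; exact htouch₀.symm
  have hvψ : ∀ x ∈ Icc a b, ψ x ≤ v x := by
    intro x hx; rw [hv]; split_ifs with h
    · exact le_rfl
    · exact huψ x hx
  refine ⟨hvcont.continuousOn, hvψ, ?_, by nlinarith⟩
  -- the three integrands
  set Fu : ℝ → ℝ := fun x => (if ψ x < u x then (1:ℝ) else α x) *
      Real.sqrt (1 + (deriv u x) ^ 2) with hFudef
  set Fv : ℝ → ℝ := fun x => (if ψ x < v x then (1:ℝ) else α x) *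
      Real.sqrt (1 + (deriv v x) ^ 2) with hFvdef
  set G : ℝ → ℝ := fun x => α x * Real.sqrt (1 + (deriv ψ x) ^ 2) with hGdef
  -- measurability
  have hmeas_u' : Measurable (deriv u) := measurable_deriv u
  have hmeas_gu : Measurable (fun x => Real.sqrt (1 + (deriv u x) ^ 2)) :=
    Real.continuous_sqrt.measurable.comp (measurable_const.add (hmeas_u'.pow_const 2))
  have hslt : MeasurableSet {x | ψ x < u x} := measurableSet_lt hψc.measurable hucont.measurable
  have hsub_ab : Set.uIoc a b ⊆ Icc a b := by
    rw [uIoc_of_le hab.le]; exact Ioc_subset_Icc_self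
  have hαae : AEMeasurable α (volume.restrict (Set.uIoc a b)) :=
    (hα.aemeasurable measurableSet_Icc).mono_measure (Measure.restrict_mono hsub_ab le_rfl)
  -- integrability of Fu on [a,b]
  have hFu_int : IntervalIntegrable Fu volume a b := by
    apply huint.mono_fun
    · exact ((aemeasurable_ite' hslt aemeasurable_const hαae).mul
        hmeas_gu.aemeasurable).aestronglyMeasurable
    · filter_upwards [ae_restrict_mem measurableSet_uIoc] with x hx
      have hxab : x ∈ Icc a b := hsub_ab hx
      have h1 : |if ψ x < u x then (1:ℝ) else α x| ≤ 1 := by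
        split_ifs with h
        · simp
        · have h2 := hα01 x hxab
          rw [abs_of_pos h2.1]; exact h2.2.le
      show ‖Fu x‖ ≤ ‖Real.sqrt (1 + deriv u x ^ 2)‖
      simp only [hFudef, Real.norm_eq_abs]
      rw [abs_mul, abs_of_nonneg (Real.sqrt_nonneg _)]
      calc |if ψ x < u x then (1:ℝ) else α x| * Real.sqrt (1 + deriv u x ^ 2)
          ≤ 1 * Real.sqrt (1 + deriv u x ^ 2) :=
            mul_le_mul_of_nonneg_right h1 (Real.sqrt_nonneg _)
        _ = Real.sqrt (1 + deriv u x ^ 2) := one_mul _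
  -- subinterval inclusions
  have hy₀ab : y₀ ∈ Icc a b := ⟨hy₀.le, by linarith⟩
  have hy₁ab : y₁ ∈ Icc a b := ⟨by linarith, hy₁.le⟩
  have hsub1 : uIcc a y₀ ⊆ uIcc a b := by
    rw [uIcc_of_le hab.le, uIcc_of_le hy₀.le]; exact Icc_subset_Icc le_rfl hy₀ab.2
  have hsub2 : uIcc y₀ y₁ ⊆ uIcc a b := by
    rw [uIcc_of_le hab.le, uIcc_of_le hy01.le]; exact hIsub
  have hsub3 : uIcc y₁ b ⊆ uIcc a b := by
    rw [uIcc_of_le hab.le, uIcc_of_le hy₁.le]; exact Icc_subset_Icc hy₁ab.1 le_rfl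
  have hsub23 : uIcc y₀ b ⊆ uIcc a b := by
    rw [uIcc_of_le hab.le, uIcc_of_le (by linarith : y₀ ≤ b)]
    exact Icc_subset_Icc hy₀ab.1 le_rfl
  have hi1 : IntervalIntegrable Fu volume a y₀ := hFu_int.mono_set hsub1
  have hi2 : IntervalIntegrable Fu volume y₀ y₁ := hFu_int.mono_set hsub2
  have hi3 : IntervalIntegrable Fu volume y₁ b := hFu_int.mono_set hsub3
  have hi23 : IntervalIntegrable Fu volume y₀ b := hFu_int.mono_set hsub23
  -- almost everywhere exclusion of single points
  have hne : ∀ c : ℝ, ∀ᵐ x : ℝ, x ≠ c := by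
    intro c; rw [ae_iff]; simpa using measure_singleton c
  -- local identifications of Fv
  have houtl : ∀ x, x < y₀ → Fv x = Fu x := by
    intro x hx
    have hev : v =ᶠ[nhds x] u := by
      filter_upwards [Iio_mem_nhds hx] with y hy
      rw [hv, if_neg]; exact fun hmem => absurd hmem.1 (not_le.mpr hy)
    have hd : deriv v x = deriv u x := hev.deriv_eq
    have hx0 : v x = u x := hev.eq_of_nhds
    simp only [hFvdef, hFudef, hd, hx0]
  have houtr : ∀ x, y₁ < x → Fv x = Fu x := by
    intro x hx
    have hev : v =ᶠ[nhds x] u := by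
      filter_upwards [Ioi_mem_nhds hx] with y hy
      rw [hv, if_neg]; exact fun hmem => absurd hmem.2 (not_le.mpr hy)
    have hd : deriv v x = deriv u x := hev.deriv_eq
    have hx0 : v x = u x := hev.eq_of_nhds
    simp only [hFvdef, hFudef, hd, hx0]
  have hinner : ∀ x ∈ Ioo y₀ y₁, Fv x = G x := by
    intro x hx
    have hev : v =ᶠ[nhds x] ψ := by
      filter_upwards [Ioo_mem_nhds hx.1 hx.2] with y hy
      rw [hv, if_pos (Ioo_subset_Icc_self hy)]
    have hd : deriv v x = deriv ψ x := hev.deriv_eq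
    have hx0 : v x = ψ x := hev.eq_of_nhds
    simp only [hFvdef, hGdef, hd, hx0, lt_irrefl, if_neg (lt_irrefl (ψ x)), if_false]
  have hinnerU : ∀ x ∈ Ioo y₀ y₁, Fu x = Real.sqrt (1 + (deriv u x) ^ 2) := by
    intro x hx
    simp only [hFudef, if_pos (habove x hx), one_mul]
  -- integrability of G
  have hGint : IntervalIntegrable G volume y₀ y₁ := by
    apply ContinuousOn.intervalIntegrable
    rw [uIcc_of_le hy01.le]
    exact (hα.mono hIsub).mul
      ((Real.continuous_sqrt.comp (continuous_const.add (hψ'c.pow 2))).continuousOn)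
  -- integrability of Fv on the three pieces
  have iv1 : IntervalIntegrable Fv volume a y₀ := by
    rw [intervalIntegrable_iff] at hi1 ⊢
    apply hi1.congr
    filter_upwards [ae_restrict_mem measurableSet_uIoc,
      (hne y₀).filter_mono (ae_mono Measure.restrict_le_self)] with x hx hxne
    rw [uIoc_of_le hy₀.le] at hx
    exact (houtl x (lt_of_le_of_ne hx.2 hxne)).symm
  have iv2 : IntervalIntegrable Fv volume y₀ y₁ := by
    rw [intervalIntegrable_iff] at hGint ⊢
    apply hGint.congr
    filter_upwards [ae_restrict_mem measurableSet_uIoc,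
      (hne y₁).filter_mono (ae_mono Measure.restrict_le_self)] with x hx hxne
    rw [uIoc_of_le hy01.le] at hx
    exact (hinner x ⟨hx.1, lt_of_le_of_ne hx.2 hxne⟩).symm
  have iv3 : IntervalIntegrable Fv volume y₁ b := by
    rw [intervalIntegrable_iff] at hi3 ⊢
    apply hi3.congr
    filter_upwards [ae_restrict_mem measurableSet_uIoc] with x hx
    rw [uIoc_of_le hy₁.le] at hx
    exact (houtr x hx.1).symm
  have iv23 : IntervalIntegrable Fv volume y₀ b := iv2.trans iv3
  -- splitting both integrals
  have eu_split : (∫ x in a..b, Fu x) =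
      (∫ x in a..y₀, Fu x) + (∫ x in y₀..y₁, Fu x) + (∫ x in y₁..b, Fu x) := by
    have e1 := integral_add_adjacent_intervals hi1 hi23
    have e2 := integral_add_adjacent_intervals hi2 hi3
    linarith
  have ev_split : (∫ x in a..b, Fv x) =
      (∫ x in a..y₀, Fv x) + (∫ x in y₀..y₁, Fv x) + (∫ x in y₁..b, Fv x) := by
    have e1 := integral_add_adjacent_intervals iv1 iv23
    have e2 := integral_add_adjacent_intervals iv2 iv3
    linarith
  -- the outer integrals coincide
  have ev1 : (∫ x in a..y₀, Fv x) = ∫ x in a..y₀, Fu x := by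
    apply intervalIntegral.integral_congr_ae
    filter_upwards [hne y₀] with x hxne hxmem
    rw [uIoc_of_le hy₀.le] at hxmem
    exact houtl x (lt_of_le_of_ne hxmem.2 hxne)
  have ev3 : (∫ x in y₁..b, Fv x) = ∫ x in y₁..b, Fu x := by
    apply intervalIntegral.integral_congr_ae
    filter_upwards with x hxmem
    rw [uIoc_of_le hy₁.le] at hxmem
    exact houtr x hxmem.1
  have ev2 : (∫ x in y₀..y₁, Fv x) = ∫ x in y₀..y₁, G x := by
    apply intervalIntegral.integral_congr_ae
    filter_upwards [hne y₁] with x hxne hxmem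
    rw [uIoc_of_le hy01.le] at hxmem
    exact hinner x ⟨hxmem.1, lt_of_le_of_ne hxmem.2 hxne⟩
  have eu2 : (∫ x in y₀..y₁, Fu x) = ∫ x in y₀..y₁, Real.sqrt (1 + (deriv u x) ^ 2) := by
    apply intervalIntegral.integral_congr_ae
    filter_upwards [hne y₁] with x hxne hxmem
    rw [uIoc_of_le hy01.le] at hxmem
    exact hinnerU x ⟨hxmem.1, lt_of_le_of_ne hxmem.2 hxne⟩
  -- the slope and associated quantities
  set m : ℝ := (ψ y₁ - ψ y₀) / δ with hm
  set A : ℝ := Real.sqrt (1 + m ^ 2) with hA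
  have hApos : 0 < A := Real.sqrt_pos.mpr (by positivity)
  have hA2 : A ^ 2 = 1 + m ^ 2 := Real.sq_sqrt (by positivity)
  -- integrability of deriv u on [y₀,y₁]
  have hu'int : IntervalIntegrable (deriv u) volume y₀ y₁ := by
    apply (huint.mono_set hsub2).mono_fun hmeas_u'.aestronglyMeasurable
    filter_upwards with x
    rw [Real.norm_eq_abs, Real.norm_eq_abs, abs_of_nonneg (Real.sqrt_nonneg _)]
    exact abs_le_sqrt (by nlinarith [sq_nonneg (deriv u x)])
  have hFTC : (∫ x in y₀..y₁, deriv u x) = u y₁ - u y₀ :=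
    integral_deriv_eq_sub (fun x _ => hu x) hu'int
  have hslope : u y₁ - u y₀ = m * δ := by
    rw [htouch₀, htouch₁, hm]; field_simp
  have hlin_int : IntervalIntegrable (fun x => (1 + m * deriv u x) / A) volume y₀ y₁ :=
    (intervalIntegrable_const.add (hu'int.const_mul m)).div_const A
  have hlin : (∫ x in y₀..y₁, (1 + m * deriv u x) / A) = δ * A := by
    have h1 : (∫ x in y₀..y₁, (1 + m * deriv u x)) = (y₁ - y₀) + m * (u y₁ - u y₀) := by
      rw [intervalIntegral.integral_add intervalIntegrable_const (hu'int.const_mul m),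
        intervalIntegral.integral_const, intervalIntegral.integral_const_mul, hFTC]
      simp [smul_eq_mul]
    rw [intervalIntegral.integral_div, h1, hslope, hwidth, div_eq_iff hApos.ne']
    nlinarith [hA2]
  have hlow : δ * A ≤ ∫ x in y₀..y₁, Real.sqrt (1 + (deriv u x) ^ 2) := by
    rw [← hlin]
    apply integral_mono_on hy01.le hlin_int (huint.mono_set hsub2)
    intro x _
    exact sqrt_linear_bound m (deriv u x)
  -- mean value theorem for ψ
  obtain ⟨ξ, hξmem, hξ⟩ := exists_deriv_eq_slope ψ hy01 hψc.continuousOn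
    (hψ.differentiable (by simp)).differentiableOn
  have hξm : deriv ψ ξ = m := by rw [hξ, hwidth]
  -- bounds on sInf and sSup
  have hbddb : BddBelow ((fun x => Real.sqrt (1 + (deriv ψ x) ^ 2)) '' Icc y₀ y₁) := by
    refine ⟨0, fun z hz => ?_⟩
    obtain ⟨x, -, rfl⟩ := hz
    positivity
  have hInf_le : sInf ((fun x => Real.sqrt (1 + (deriv ψ x) ^ 2)) '' Icc y₀ y₁) ≤ A := by
    rw [hA, ← hξm]
    exact csInf_le hbddb ⟨ξ, Ioo_subset_Icc_self hξmem, rfl⟩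
  have hbdda : BddAbove ((fun x => Real.sqrt (1 + (deriv ψ x) ^ 2)) '' Icc y₀ y₁) :=
    (isCompact_Icc.image_of_continuousOn
      ((Real.continuous_sqrt.comp (continuous_const.add (hψ'c.pow 2))).continuousOn)).bddAbove
  have hle_Sup : ∀ x ∈ Icc y₀ y₁, Real.sqrt (1 + (deriv ψ x) ^ 2) ≤
      sSup ((fun x => Real.sqrt (1 + (deriv ψ x) ^ 2)) '' Icc y₀ y₁) :=
    fun x hx => le_csSup hbdda ⟨x, hx, rfl⟩
  have hᾱpos : 0 < ᾱ := by
    obtain ⟨x₀, hx₀, hx₀e⟩ := hᾱmax.1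
    rw [← hx₀e]; exact (hα01 x₀ hx₀).1
  -- upper bound on the inner v-integral
  have hupper : (∫ x in y₀..y₁, G x) ≤
      δ * (ᾱ * sSup ((fun x => Real.sqrt (1 + (deriv ψ x) ^ 2)) '' Icc y₀ y₁)) := by
    have hmono := integral_mono_on hy01.le hGint
      (_root_.intervalIntegrable_const
        (c := ᾱ * sSup ((fun x => Real.sqrt (1 + (deriv ψ x) ^ 2)) '' Icc y₀ y₁)))
      (fun x hx => by
        exact mul_le_mul (hᾱmax.2 ⟨x, hIsub hx, rfl⟩) (hle_Sup x hx)
          (Real.sqrt_nonneg _) hᾱpos.le)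
    rw [intervalIntegral.integral_const, smul_eq_mul, hwidth] at hmono
    exact hmono
  -- assemble
  have hδ' := hδ y₀ y₁ hy₀ hy₁ hy01.le (by linarith)
  have k1 : δ * sInf ((fun x => Real.sqrt (1 + (deriv ψ x) ^ 2)) '' Icc y₀ y₁) ≤ δ * A :=
    mul_le_mul_of_nonneg_left hInf_le hδpos.le
  have hIFu : δ * sInf ((fun x => Real.sqrt (1 + (deriv ψ x) ^ 2)) '' Icc y₀ y₁) ≤
      ∫ x in y₀..y₁, Fu x := by
    rw [eu2]; linarith
  have k2 : δ * ((1 - ᾱ) / 2) ≤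
      δ * (sInf ((fun x => Real.sqrt (1 + (deriv ψ x) ^ 2)) '' Icc y₀ y₁) -
        ᾱ * sSup ((fun x => Real.sqrt (1 + (deriv ψ x) ^ 2)) '' Icc y₀ y₁)) :=
    mul_le_mul_of_nonneg_left hδ' hδpos.le
  have final : (∫ x in a..b, Fu x) - (∫ x in a..b, Fv x) ≥ δ * (1 - ᾱ) / 2 := by
    rw [eu_split, ev_split, ev1, ev2, ev3]
    linarith [hupper, hIFu, k2]
  calc E₀ u - E₀ v = (∫ x in a..b, Fu x) - (∫ x in a..b, Fv x) := by
        rw [hE₀ u, hE₀ v]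
      _ ≥ δ * (1 - ᾱ) / 2 := final
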